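/- Suppose ψ: N × B_ε^k → U is a diffeomorphism with ψ*ω = (1 + ∑_{j=1}^k y_j) q*(ω|_N) + ∑_{j=1}^k dy_j ∧ q*(α_j), where q is the projection onto N. Define z_j = y_j ∘ ψ^{-1} on U and β_j = (ψ^{-1})*(q*α_j). Let X_{z_j} be the Hamiltonian vector field of z_j with respect to ω. Then dz_j(X_{z_i}) = 0 and β_j(X_{z_i}) = δ_{ij} for all 1 ≤ i, j ≤ k; in particular the functions z_1, …, z_k pairwise Poisson-commute on U. -/
import Mathlib


/-- Pointwise (tangent-space) formulation of the consequences of the `k`-contact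
normal form `ω = (1 + ∑ y_j) q*(ω|_N) + ∑ dy_j ∧ q*(α_j)`:
at a point, the tangent space `V` splits into the tangent space `T` of the leafwise
copy of `N` and vertical directions `e_1, …, e_k`; `W` is the pullback of `ω|_N`
(so it kills vertical vectors), the coordinates `z_j` (with differentials `z j`)
kill `T`, the forms `β_j = q*α_j` kill vertical directions and the `β_j` are
linearly independent on the kernel of `W|_T` (the `k`-contact condition).
If `X i` is the Hamiltonian vector field of `z_i`, i.e. `ω (X i) · = −dz_i`, then
`dz_j(X_{z_i}) = 0` and `β_j(X_{z_i}) = δ_{ij}`; in particular the `z_j` pairwise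
Poisson-commute: `{z_i, z_j} = ω(X_i, X_j) = 0`. -/
theorem contact_normal_form_consequences
    {V : Type*} [AddCommGroup V] [Module ℝ V] (k : ℕ)
    (ω W : V →ₗ[ℝ] V →ₗ[ℝ] ℝ) (z β : Fin k → (V →ₗ[ℝ] ℝ)) (a : ℝ) (ha : a ≠ 0)
    (T : Submodule ℝ V) (e : Fin k → V)
    (hWalt : ∀ v w : V, W v w = -W w v)
    (hdecomp : ∀ v : V, ∃ t ∈ T, v = t + ∑ j, z j v • e j)
    (hze : ∀ i j : Fin k, z i (e j) = if i = j then 1 else 0)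
    (hzT : ∀ i : Fin k, ∀ t ∈ T, z i t = 0)
    (hβe : ∀ i j : Fin k, β i (e j) = 0)
    (hWe : ∀ (j : Fin k) (v : V), W (e j) v = 0)
    (hω : ∀ v w : V, ω v w = a * W v w + ∑ j, (z j v * β j w - β j v * z j w))
    (hind : ∀ w : Fin k → ℝ,
      (∀ t ∈ T, (∀ t' ∈ T, W t t' = 0) → ∑ j, w j * β j t = 0) → w = 0)
    (X : Fin k → V) (hX : ∀ (i : Fin k) (v : V), ω (X i) v = -z i v) :
    (∀ i j : Fin k, z j (X i) = 0) ∧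
    (∀ i j : Fin k, β j (X i) = if i = j then 1 else 0) ∧
    (∀ i j : Fin k, ω (X i) (X j) = 0) := by

  have hβ : ∀ i j : Fin k, β j (X i) = if i = j then 1 else 0 := by
    intro i j
    have h := hX i (e j)
    rw [hω] at h
    have hW0 : W (X i) (e j) = 0 := by rw [hWalt, hWe]; ring
    rw [hW0, hze] at h
    have hs : ∑ m, (z m (X i) * β m (e j) - β m (X i) * z m (e j))
        = -β j (X i) := by
      rw [Finset.sum_congr rfl (fun m _ => by rw [hβe, hze, mul_zero, zero_sub])]
      simp [mul_ite]
    rw [hs] at h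
    linarith
  have hz : ∀ i j : Fin k, z j (X i) = 0 := by
    intro i j
    obtain ⟨t₀, ht₀, hXi⟩ := hdecomp (X i)
    have key : (fun m => z m (X i)) = 0 := by
      apply hind
      intro t ht hker
      have h := hX i t
      rw [hω, hzT i t ht] at h
      have hWt : W (X i) t = 0 := by
        rw [hWalt]
        have h1 : W t (X i) = 0 := by
          rw [hXi, map_add, map_sum, hker t₀ ht₀]
          have h2 : ∀ m : Fin k, W t (z m (X i) • e m) = 0 := fun m => by
            rw [map_smul, smul_eq_mul]
            rw [hWalt t (e m), hWe]
            ring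
          rw [Finset.sum_congr rfl (fun m _ => h2 m)]
          simp
        rw [h1]; ring
      rw [hWt, mul_zero, zero_add] at h
      have hs : ∑ m, (z m (X i) * β m t - β m (X i) * z m t)
          = ∑ m, z m (X i) * β m t := by
        apply Finset.sum_congr rfl
        intro m _
        rw [hzT m t ht, mul_zero, sub_zero]
      rw [hs] at h
      linarith
    exact congrFun key j
  refine ⟨hz, hβ, fun i j => ?_⟩
  rw [hX i (X j), hz j i, neg_zero]
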